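/- arXiv:1509.05991 — 2 statements merged into one kernel-verified Lean document; each statement's English description precedes it below -/
import Mathlib

section
/- Suppose Assumption (*) holds for c and let d ∈ D, u ∈ U_d. Then there exist unique elements q_{u',u} ∈ A, indexed by u' = u and by u' ∈ U_d with u' < u in Bruhat order, such that q_{u,u} = 1, q_{u',u} ∈ A_{<0} for u' ≠ u, and C_d T_u ≡ Σ_{u'} q_{u',u} C_d F_{u'} mod H_{<c}. Consequently, for v ∈ W with v⁻¹ ∈ U_d, T_v C_d ≡ Σ_{v'} q_{v'⁻¹,v⁻¹} E_{v'} C_d mod H_{<c}, the sum over v' ∈ W with v'⁻¹ ∈ U_d and v'⁻¹ equal to v⁻¹ or below it in Bruhat order. -/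
open scoped Classical TensorProduct

noncomputable section

namespace KL

variable (Γ : Type) [AddCommGroup Γ] [LinearOrder Γ] [IsOrderedAddMonoid Γ]

/-- The group ring `A = ℤ[Γ]`. -/
abbrev A := AddMonoidAlgebra ℤ Γ

variable {Γ}

/-- The basis element `q^γ` of `A`. -/
def qe (γ : Γ) : A Γ := AddMonoidAlgebra.single γ 1

/-- `A_{<0}`: the ℤ-span of the `q^γ` with `γ < 0`, i.e. elements supported in negative degrees. -/
def Alt0 (Γ : Type) [AddCommGroup Γ] [LinearOrder Γ] [IsOrderedAddMonoid Γ] : Set (A Γ) :=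
  {a : A Γ | ∀ γ ∈ a.coeff.support, γ < 0}

/-- The degree of an element of `A` (`⊥` for `0`). -/
def adeg (a : A Γ) : WithBot Γ := a.coeff.support.max

variable {B W : Type} [Group W] {M : CoxeterMatrix B}
variable {H : Type} [Ring H]

/-- Bundled data of a Coxeter system `(W,S)` together with a positive weight function `L`,
its Hecke algebra `H` over `A = ℤ[Γ]` with standard basis `T`, the bar involution, and the
Kazhdan-Lusztig basis `C`. -/
structure KLData (M : CoxeterMatrix B) (W : Type) [Group W] (Γ : Type)
    [AddCommGroup Γ] [LinearOrder Γ] [IsOrderedAddMonoid Γ] (H : Type) [Ring H] [Algebra (A Γ) H] where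
  /-- the Coxeter system -/
  cs : CoxeterSystem M W
  /-- the weight function -/
  L : W → Γ
  L_add : ∀ w w' : W, cs.length (w * w') = cs.length w + cs.length w' →
    L (w * w') = L w + L w'
  L_pos : ∀ w : W, w ≠ 1 → 0 < L w
  /-- the standard basis `T_w` of the Hecke algebra -/
  bT : Module.Basis W (A Γ) H
  T_mul : ∀ w w' : W, cs.length (w * w') = cs.length w + cs.length w' →
    bT w * bT w' = bT (w * w')
  T_quad : ∀ i : B,
    (bT (cs.simple i) + algebraMap (A Γ) H (qe (-(L (cs.simple i))))) *
      (bT (cs.simple i) - algebraMap (A Γ) H (qe (L (cs.simple i)))) = 0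
  /-- the bar involution -/
  bar : H →+* H
  bar_bar : ∀ h : H, bar (bar h) = h
  bar_q : ∀ γ : Γ, bar (algebraMap (A Γ) H (qe γ)) = algebraMap (A Γ) H (qe (-γ))
  bar_T : ∀ w : W, bar (bT w) * bT w⁻¹ = 1
  bar_T' : ∀ w : W, bT w⁻¹ * bar (bT w) = 1
  /-- the Kazhdan-Lusztig basis `C_w` -/
  bC : Module.Basis W (A Γ) H
  bar_C : ∀ w : W, bar (bC w) = bC w
  C_mod : ∀ w v : W, bT.repr (bC w - bT w) v ∈ Alt0 Γ

namespace KLData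

variable [Algebra (A Γ) H] (d : KLData M W Γ H)

/-- `T_w` -/
def T (w : W) : H := d.bT w

/-- `C_w` -/
def C (w : W) : H := d.bC w

/-- `H_{<0} = ⊕_w A_{<0} T_w`. -/
def Hlt0 : Set H := {h : H | ∀ w : W, d.bT.repr h w ∈ Alt0 Γ}

/-- The structure constants `h_{x,y,z}` of the KL basis. -/
def hk (x y z : W) : A Γ := d.bC.repr (d.C x * d.C y) z

/-- One step of the preorder `≤_L` : `x` appears in `C_z C_y` for some `z`. -/
def leLstep (x y : W) : Prop := ∃ z : W, d.bC.repr (d.C z * d.C y) x ≠ 0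

/-- The preorder `≤_L`. -/
def leL : W → W → Prop := Relation.ReflTransGen d.leLstep

/-- `x ~_L y` -/
def simL (x y : W) : Prop := d.leL x y ∧ d.leL y x

/-- `x ≤_R y` -/
def leR (x y : W) : Prop := d.leL x⁻¹ y⁻¹

/-- `x ~_R y` -/
def simR (x y : W) : Prop := d.simL x⁻¹ y⁻¹

/-- The preorder `≤_LR`, generated by `≤_L` and `≤_R`. -/
def leLR : W → W → Prop :=
  Relation.ReflTransGen (fun x y => d.leLstep x y ∨ d.leLstep x⁻¹ y⁻¹)

/-- `x ~_LR y` -/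
def simLR (x y : W) : Prop := d.leLR x y ∧ d.leLR y x

/-- left cells -/
def IsLeftCell (Θ : Set W) : Prop := ∃ x : W, Θ = {y | d.simL x y}

/-- right cells -/
def IsRightCell (Φ : Set W) : Prop := ∃ x : W, Φ = {y | d.simR x y}

/-- two-sided cells -/
def IsTwoSidedCell (c : Set W) : Prop := ∃ x : W, c = {y | d.simLR x y}

/-- `z < c` for a two-sided cell `c`. -/
def ltc (c : Set W) (z : W) : Prop := z ∉ c ∧ ∀ w ∈ c, d.leLR z w

/-- `z ≤ c` for a two-sided cell `c`. -/
def lec (c : Set W) (z : W) : Prop := ∀ w ∈ c, d.leLR z w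

/-- The ideal `H_{<c}`, spanned by the `C_z` with `z < c`. -/
def Hltc (c : Set W) : Submodule (A Γ) H :=
  Submodule.span (A Γ) (d.C '' {z : W | d.ltc c z})

/-- Bruhat order on `W`. -/
def bruhatLE : W → W → Prop :=
  Relation.ReflTransGen (fun x y => ∃ t : W, d.cs.IsReflection t ∧ y = x * t ∧
    d.cs.length x < d.cs.length y)

/-- Strict Bruhat order on `W`. -/
def bruhatLT (x y : W) : Prop := d.bruhatLE x y ∧ x ≠ y

/-- Duflo order: `x ≤_D y` iff `l(x⁻¹y) = l(y) - l(x)`. -/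
def dufloLE (x y : W) : Prop :=
  d.cs.length x + d.cs.length (x⁻¹ * y) = d.cs.length y

/-- The `A`-linear anti-automorphism `♭` of `H` with `T_w ↦ T_{w⁻¹}`. -/
def flat : H →ₗ[A Γ] H := d.bT.constr ℕ (fun w => d.bT w⁻¹)

/-- `P_{e,z}` : the coefficient of `T_e` in `C_z`. -/
def Pel (z : W) : A Γ := d.bT.repr (d.C z) 1

/-- `Δ(z)`, defined by `P_{e,z} = n_z q^{-Δ(z)} + lower degree terms`. -/
def Del (z : W) : Γ := -((d.Pel z).coeff.support.max.unbotD 0)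

/-- `n_z`, defined by `P_{e,z} = n_z q^{-Δ(z)} + lower degree terms`. -/
def nz (z : W) : ℤ := (d.Pel z).coeff (-(d.Del z))

/-- `af : W → Γ` is Lusztig's `a`-function iff for each `z`, `af z` is the (attained)
supremum of the degrees of the `h_{x,y,z}`. -/
def IsAFunction (af : W → Γ) : Prop :=
  ∀ z : W, (∀ x y : W, adeg (d.hk x y z) ≤ (af z : WithBot Γ)) ∧
    (∃ x y : W, adeg (d.hk x y z) = (af z : WithBot Γ))

/-- `γ_{x,y,z}` : the coefficient of `q^{a(z⁻¹)}` in `h_{x,y,z⁻¹}`. -/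
def gam (af : W → Γ) (x y z : W) : ℤ := (d.hk x y z⁻¹).coeff (af z⁻¹)

/-- The set `𝒟 = {z | a(z) = Δ(z)}`. -/
def Dset (af : W → Γ) : Set W := {z : W | af z = d.Del z}

end KLData

variable [Algebra (A Γ) H]

/-- Assumption (*): a two-sided cell `c` equipped with subsets `D ⊆ c` and
`B_d, U_d ⊆ W` (`d ∈ D`) satisfying conditions (ia)-(iv). -/
structure CellDecomp (d : KLData M W Γ H) (c : Set W) where
  isCell : d.IsTwoSidedCell c
  D : Set W
  Bd : W → Set W
  Ud : W → Set W
  D_sub : D ⊆ c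
  -- (ia) : c = c⁻¹ = ⊔_{d ∈ D} B_d d U_d (disjoint union)
  c_inv : ∀ w : W, w ∈ c ↔ w⁻¹ ∈ c
  c_eq : c = ⋃ d0 ∈ D, {w : W | ∃ b ∈ Bd d0, ∃ u ∈ Ud d0, w = b * d0 * u}
  disj : ∀ d1 ∈ D, ∀ d2 ∈ D, d1 ≠ d2 →
    Disjoint {w : W | ∃ b ∈ Bd d1, ∃ u ∈ Ud d1, w = b * d1 * u}
             {w : W | ∃ b ∈ Bd d2, ∃ u ∈ Ud d2, w = b * d2 * u}
  -- (ib)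
  len_add : ∀ d0 ∈ D, ∀ b ∈ Bd d0, ∀ u ∈ Ud d0,
    d.cs.length (b * d0 * u) = d.cs.length b + d.cs.length d0 + d.cs.length u
  -- (ic)
  one_mem_B : ∀ d0 ∈ D, (1 : W) ∈ Bd d0
  one_mem_U : ∀ d0 ∈ D, (1 : W) ∈ Ud d0
  Binv_sub_U : ∀ d0 ∈ D, ∀ b ∈ Bd d0, b⁻¹ ∈ Ud d0
  -- (id)
  not_mem_c : ∀ d0 ∈ D, ∀ w : W, w ∉ Ud d0 →
    (∀ i : B, d.bruhatLE (d.cs.simple i) d0 →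
      d.cs.length (d.cs.simple i * w) = d.cs.length w + 1) → d0 * w ∉ c
  -- (iia) : each d ∈ D is an involution in a finite parabolic subgroup
  d_inv : ∀ d0 ∈ D, d0 * d0 = 1 ∧ d0 ≠ 1
  d_parabolic : ∀ d0 ∈ D, ∃ I : Set B,
    (Subgroup.closure (d.cs.simple '' I) : Set W).Finite ∧
    d0 ∈ Subgroup.closure (d.cs.simple '' I)
  s_len : ∀ d0 ∈ D, ∀ i : B, d.bruhatLE (d.cs.simple i) d0 →
    ∀ u ∈ Ud d0, d.cs.length (d.cs.simple i * u) = d.cs.length u + 1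
  -- (iib)
  TsC : ∀ d0 ∈ D, ∀ i : B, d.bruhatLE (d.cs.simple i) d0 →
    ∃ a : A Γ, d.T (d.cs.simple i) * d.C d0 - a • d.C d0 ∈ d.Hltc c
  -- (iic)
  h_ne : ∀ d0 ∈ D, d.hk d0 d0 d0 ≠ 0
  -- (iii)
  dU_rightCell : ∀ d0 ∈ D, d.IsRightCell {w : W | ∃ u ∈ Ud d0, w = d0 * u}
  -- (iv)
  TCT : ∀ d0 ∈ D, ∀ b ∈ Bd d0, ∀ u ∈ Ud d0,
    ∃ h0 ∈ d.Hlt0, ∃ h1 ∈ d.Hltc c,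
      d.T b * d.C d0 * d.T u - d.T (b * d0 * u) = h0 + h1

namespace CellDecomp

variable {d : KLData M W Γ H} {c : Set W} (cd : CellDecomp d c)

/-- `F` is the element `F_w` : `F = T_w + Σ_{y ∈ U_d, y < w} p_{y,w} T_y` with
`p_{y,w} ∈ A_{<0}`, and `C_d F ≡ C_{dw} mod H_{<c}`. -/
def IsF (d0 w : W) (F : H) : Prop :=
  (d.bT.repr F w = 1 ∧
    ∀ y : W, y ≠ w → d.bT.repr F y ≠ 0 →
      y ∈ cd.Ud d0 ∧ d.bruhatLT y w ∧ d.bT.repr F y ∈ Alt0 Γ) ∧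
  d.C d0 * F - d.C (d0 * w) ∈ d.Hltc c

/-- The right cell `Φ_{b,d} = b d U_d`. -/
def Phi (b d0 : W) : Set W := {x : W | ∃ u ∈ cd.Ud d0, x = b * d0 * u}

/-- The left cell `Θ_{b,d} = Φ_{b,d}⁻¹`. -/
def Theta (b d0 : W) : Set W := {x : W | ∃ u ∈ cd.Ud d0, x = u⁻¹ * d0 * b⁻¹}

end CellDecomp

/-- The Coxeter matrix of affine type C̃2: generators `s0 s1 s2`,
`(s0 s1)⁴ = (s1 s2)⁴ = (s0 s2)² = 1`. -/
def Ct2 : CoxeterMatrix (Fin 3) where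
  M := !![1, 4, 2; 4, 1, 4; 2, 4, 1]
  isSymm := by decide
  diagonal := by decide
  off_diagonal := by intro i i' h; fin_cases i <;> fin_cases i' <;> simp_all

/-- The Coxeter matrix of affine type G̃2: generators `s0 s1 s2`,
`(s0 s1)³ = (s1 s2)⁶ = (s0 s2)² = 1`. -/
def Gt2 : CoxeterMatrix (Fin 3) where
  M := !![1, 3, 2; 3, 1, 6; 2, 6, 1]
  isSymm := by decide
  diagonal := by decide
  off_diagonal := by intro i i' h; fin_cases i <;> fin_cases i' <;> simp_all

/-- `ξ_γ = q^γ - q^{-γ}`. -/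
def xi (γ : Γ) : A Γ := qe γ - qe (-γ)

/-- `η_γ = q^γ + q^{-γ}`. -/
def eta (γ : Γ) : A Γ := qe γ + qe (-γ)


namespace KLData

variable [Algebra (A Γ) H] (d : KLData M W Γ H)

/-- The free `A ⊗_ℤ A`-module with basis `{E_w : w ∈ c}`. -/
abbrev Emod (Γ : Type) [AddCommGroup Γ] [LinearOrder Γ] [IsOrderedAddMonoid Γ] {W : Type} (c : Set W) :=
  ↥c →₀ (A Γ ⊗[ℤ] A Γ)

/-- `C_x ⬝ E_w = Σ_{z ∈ c} (h_{x,w,z} ⊗ 1) E_z`. -/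
def lactB (c : Set W) (x : W) (w : ↥c) : Emod Γ c :=
  Finsupp.mapRange (fun a => a ⊗ₜ[ℤ] (1 : A Γ)) (by simp)
    ((d.bC.repr (d.C x * d.C (w : W))).subtypeDomain (· ∈ c))

/-- The left action of `C_x` on `E`, extended `(A ⊗ A)`-linearly from the basis. -/
def lact (c : Set W) (x : W) (v : Emod Γ c) : Emod Γ c :=
  v.sum fun w t => t • d.lactB c x w

/-- `E_w ⬝ C_y = Σ_{z ∈ c} (1 ⊗ h_{w,y,z}) E_z`. -/
def ractB (c : Set W) (y : W) (w : ↥c) : Emod Γ c :=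
  Finsupp.mapRange (fun a => (1 : A Γ) ⊗ₜ[ℤ] a) (by simp)
    ((d.bC.repr (d.C (w : W) * d.C y)).subtypeDomain (· ∈ c))

/-- The right action of `C_y` on `E`, extended `(A ⊗ A)`-linearly from the basis. -/
def ract (c : Set W) (y : W) (v : Emod Γ c) : Emod Γ c :=
  v.sum fun w t => t • d.ractB c y w

end KLData

end KL

open KL

/-!
Since `F_v = T_v + Σ_{y ∈ U_d, y < v} p_{y,v} T_y` with `p_{y,v} ∈ A_{<0}`, the transition matrix
from `(T_v)` to `(F_v)` is unitriangular with off-diagonal entries in the non-unital ring `A_{<0}`,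
and so is its inverse. Inverting it gives `T_u = Σ q_{u',u} F_{u'}` exactly; multiplying by `C_d`
gives the first expansion, and applying the anti-automorphism `♭` gives the second.
Uniqueness holds because `C_d F_{u'} ≡ C_{du'}` modulo `H_{<c}`, the `du'` are distinct elements
of `c`, and no element of `H_{<c}` has a nonzero `C_w`-coefficient with `w ∈ c`.
-/

namespace KL

section Unitriangular

open Finsupp

variable {ι κ R M : Type*} [Ring R] [AddCommGroup M] [Module R M]

def lowerTerms (S : NonUnitalSubring R) (r : ι → ι → Prop) (w : ι) : AddSubgroup (ι →₀ R) where
  carrier := {f | (∀ y ∈ f.support, r y w) ∧ ∀ y, f y ∈ S}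
  zero_mem' := ⟨by simp, fun _ => zero_mem S⟩
  add_mem' := by
    classical
    rintro f g ⟨hfr, hfS⟩ ⟨hgr, hgS⟩
    refine ⟨fun y hy => ?_, fun y => add_mem (hfS y) (hgS y)⟩
    rcases Finset.mem_union.mp (support_add hy) with h | h
    exacts [hfr y h, hgr y h]
  neg_mem' := by
    rintro f ⟨hfr, hfS⟩
    exact ⟨by simpa only [support_neg] using hfr, fun y => neg_mem (hfS y)⟩

/-- `f` is a column of a unitriangular matrix with off-diagonal entries in `S`. -/
def IsUnitriangular (S : NonUnitalSubring R) (r : ι → ι → Prop) (w : ι) (f : ι →₀ R) : Prop :=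
  f - single w 1 ∈ lowerTerms S r w

variable {S : NonUnitalSubring R} {r : ι → ι → Prop}

lemma single_mem_lowerTerms {y w : ι} {a : R} (ha : a ∈ S) (hyw : r y w) :
    single y a ∈ lowerTerms S r w := by
  classical
  refine ⟨fun z hz => ?_, fun z => ?_⟩
  · rwa [Finset.mem_singleton.mp (support_single_subset hz)]
  · by_cases h : y = z
    · simp [h, ha]
    · simp [h]

lemma smul_mem_lowerTerms [IsTrans ι r] {y w : ι} {a : R} {f : ι →₀ R}
    (ha : a ∈ S) (hf : f ∈ lowerTerms S r y) (hyw : r y w) : a • f ∈ lowerTerms S r w :=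
  ⟨fun z hz => _root_.trans_of r (hf.1 z (support_smul hz)) hyw, fun z => mul_mem ha (hf.2 z)⟩

lemma IsUnitriangular.smul_mem_lowerTerms [IsTrans ι r] {y w : ι} {a : R}
    {f : ι →₀ R} (hf : IsUnitriangular S r y f) (ha : a ∈ S) (hyw : r y w) :
    a • f ∈ lowerTerms S r w := by
  have hsplit : a • f = single y a + a • (f - single y 1) := by
    rw [smul_sub, smul_single_one, add_sub_cancel]
  rw [hsplit]
  exact add_mem (single_mem_lowerTerms ha hyw) (KL.smul_mem_lowerTerms ha hf hyw)

lemma IsUnitriangular.sub_mem_lowerTerms {w : ι} {f g : ι →₀ R}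
    (hf : IsUnitriangular S r w f) (hg : IsUnitriangular S r w g) :
    f - g ∈ lowerTerms S r w := by
  rw [← sub_sub_sub_cancel_right f g (single w 1)]
  exact sub_mem hf hg

lemma isUnitriangular_iff {w : ι} {f : ι →₀ R} (hw : ¬ r w w) :
    IsUnitriangular S r w f ↔ f w = 1 ∧ ∀ y, y ≠ w → f y ∈ S ∧ (f y ≠ 0 → r y w) := by
  classical
  have hoff : ∀ y, y ≠ w → (f - single w 1 : ι →₀ R) y = f y := fun y hy => by
    simp [Ne.symm hy]
  constructor
  · rintro ⟨hr, hS⟩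
    refine ⟨?_, fun y hy => ⟨hoff y hy ▸ hS y, fun hne => hr y ?_⟩⟩
    · by_contra hne
      exact hw (hr w (by simpa [sub_eq_zero] using hne))
    · rwa [mem_support_iff, hoff y hy]
  · rintro ⟨h1, hS⟩
    refine ⟨fun y hy => ?_, fun y => ?_⟩ <;> by_cases hyw : y = w
    · simp [hyw, h1] at hy
    · exact (hS y hyw).2 (by rwa [mem_support_iff, hoff y hyw] at hy)
    · simp [hyw, h1]
    · exact hoff y hyw ▸ (hS y hyw).1

lemma exists_isUnitriangular_linearCombination_eq [IsTrans ι r] (b : Module.Basis ι R M)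
    (hwf : WellFounded r) {F : ι → M} {u : ι}
    (hF : ∀ v, v = u ∨ r v u → IsUnitriangular S r v (b.repr (F v))) :
    ∃ q, IsUnitriangular S r u q ∧ linearCombination R F q = b u := by
  suffices ∀ v, v = u ∨ r v u → ∃ q, IsUnitriangular S r v q ∧ linearCombination R F q = b v from
    this u (Or.inl rfl)
  intro v
  induction v using hwf.induction with
  | _ v ih =>
  intro hv
  set P := b.repr (F v) - single v 1 with hP
  have hPr : ∀ y ∈ P.support, r y v := (hF v hv).1
  have hPS : ∀ y, P y ∈ S := (hF v hv).2
  have hlower : ∀ y ∈ P.support, ∃ q, IsUnitriangular S r y q ∧ linearCombination R F q = b y :=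
    fun y hy => ih y (hPr y hy) <| Or.inr <| by
      rcases hv with rfl | hvu
      exacts [hPr y hy, _root_.trans_of r (hPr y hy) hvu]
  choose! g hg hgF using hlower
  refine ⟨single v 1 - P.sum fun y a => a • g y, ?_, ?_⟩
  · show _ - _ ∈ _
    rw [sub_sub_cancel_left]
    exact neg_mem (sum_mem fun y hy => (hg y hy).smul_mem_lowerTerms (hPS y) (hPr y hy))
  · calc linearCombination R F (single v 1 - P.sum fun y a => a • g y)
        = F v - P.sum fun y a => a • b y := by
          rw [map_sub, linearCombination_single, one_smul, map_finsuppSum]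
          exact congrArg _ (sum_congr fun y hy => by rw [map_smul, hgF y hy])
      _ = b v := by
          rw [← linearCombination_apply, hP, map_sub, b.linearCombination_repr,
            linearCombination_single, one_smul, sub_sub_cancel]

lemma eq_zero_of_linearCombination_mem (b : Module.Basis κ R M) {N : Submodule R M}
    {e : ι → κ} (he : Function.Injective e) {v : ι → M} {a : ι →₀ R}
    (hN : ∀ i ∈ a.support, ∀ n ∈ N, b.repr n (e i) = 0)
    (hv : ∀ i ∈ a.support, v i - b (e i) ∈ N)
    (ha : linearCombination R v a ∈ N) : a = 0 := by
  have hdiff : linearCombination R v a - linearCombination R (b ∘ e) a ∈ N := by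
    rw [linearCombination_apply, linearCombination_apply, ← sum_sub]
    exact N.sum_mem fun i hi => by
      simpa only [smul_sub, Function.comp_apply] using N.smul_mem (a i) (hv i hi)
  have hbe := N.sub_mem ha hdiff
  rw [sub_sub_cancel, ← linearCombination_mapDomain] at hbe
  ext i
  by_contra hi
  have hi' := hN i (mem_support_iff.mpr hi) _ hbe
  rw [b.repr_linearCombination, mapDomain_apply he] at hi'
  exact hi hi'

end Unitriangular

def alt0Subring (Γ : Type) [AddCommGroup Γ] [LinearOrder Γ] [IsOrderedAddMonoid Γ] :
    NonUnitalSubring (A Γ) where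
  carrier := Alt0 Γ
  zero_mem' := by simp [Alt0]
  add_mem' {a b} ha hb γ hγ := by
    classical
    rcases Finset.mem_union.mp (Finsupp.support_add hγ) with h | h
    exacts [ha γ h, hb γ h]
  neg_mem' {a} ha γ hγ := ha γ (by rwa [AddMonoidAlgebra.coeff_neg, Finsupp.support_neg] at hγ)
  mul_mem' {a b} ha hb γ hγ := by
    obtain ⟨γ₁, h₁, γ₂, h₂, rfl⟩ :=
      Finset.mem_add.mp (AddMonoidAlgebra.support_coeff_mul_subset a b hγ)
    exact add_neg (ha γ₁ h₁) (hb γ₂ h₂)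

variable {B W Γ H : Type} [Group W] {M : CoxeterMatrix B} [AddCommGroup Γ] [LinearOrder Γ]
  [IsOrderedAddMonoid Γ] [Ring H] [Algebra (A Γ) H]

namespace KLData

variable (d : KLData M W Γ H)

lemma length_le_of_bruhatLE {x y : W} (h : d.bruhatLE x y) : d.cs.length x ≤ d.cs.length y := by
  induction h with
  | refl => rfl
  | tail _ step ih => obtain ⟨t, -, -, hlt⟩ := step; exact ih.trans hlt.le

lemma length_lt_of_bruhatLT {x y : W} (h : d.bruhatLT x y) : d.cs.length x < d.cs.length y := by
  obtain ⟨hle, hne⟩ := h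
  rcases Relation.ReflTransGen.cases_tail hle with rfl | ⟨z, hz, t, -, -, hlt⟩
  · exact absurd rfl hne
  · exact (d.length_le_of_bruhatLE hz).trans_lt hlt

lemma bruhatLT_trans {x y z : W} (h₁ : d.bruhatLT x y) (h₂ : d.bruhatLT y z) :
    d.bruhatLT x z :=
  ⟨h₁.1.trans h₂.1, by
    rintro rfl
    exact lt_asymm (d.length_lt_of_bruhatLT h₁) (d.length_lt_of_bruhatLT h₂)⟩

lemma repr_C_eq_zero_of_mem_Hltc {c : Set W} {h : H} (hh : h ∈ d.Hltc c) {w : W} (hw : w ∈ c) :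
    d.bC.repr h w = 0 := by
  induction hh using Submodule.span_induction with
  | mem x hx =>
    obtain ⟨z, hz, rfl⟩ := hx
    rw [KLData.C, Module.Basis.repr_self, Finsupp.single_apply, if_neg]
    rintro rfl
    exact hz.1 hw
  | zero => simp
  | add x y _ _ hx hy => simp [hx, hy]
  | smul a x _ hx => simp [hx]

end KLData

namespace CellDecomp

variable {d : KLData M W Γ H} {c : Set W} (cd : CellDecomp d c)

lemma mul_mem {d0 u : W} (hd0 : d0 ∈ cd.D) (hu : u ∈ cd.Ud d0) : d0 * u ∈ c := by
  rw [cd.c_eq]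
  exact Set.mem_iUnion₂.mpr ⟨d0, hd0, 1, cd.one_mem_B d0 hd0, u, hu, by rw [one_mul]⟩

def ltU (d0 y w : W) : Prop := y ∈ cd.Ud d0 ∧ d.bruhatLT y w

instance (d0 : W) : IsTrans W (cd.ltU d0) :=
  ⟨fun _ _ _ h₁ h₂ => ⟨h₁.1, d.bruhatLT_trans h₁.2 h₂.2⟩⟩

lemma wellFounded_ltU (d0 : W) : WellFounded (cd.ltU d0) :=
  Subrelation.wf (fun h => d.length_lt_of_bruhatLT h.2) (InvImage.wf _ wellFounded_lt)

lemma not_ltU_self (d0 w : W) : ¬ cd.ltU d0 w w := fun h => h.2.2 rfl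

lemma IsF.isUnitriangular {d0 w : W} {F : H} (hF : cd.IsF d0 w F) :
    IsUnitriangular (alt0Subring Γ) (cd.ltU d0) w (d.bT.repr F) := by
  refine (isUnitriangular_iff (cd.not_ltU_self d0 w)).2 ⟨hF.1.1, fun y hy => ?_⟩
  by_cases h0 : d.bT.repr F y = 0
  · exact ⟨h0 ▸ zero_mem _, fun h => absurd h0 h⟩
  · obtain ⟨hU, hlt, hS⟩ := hF.1.2 y hy h0
    exact ⟨hS, fun _ => ⟨hU, hlt⟩⟩

lemma eq_of_isUnitriangular_of_mem_Hltc {d0 u : W} (hd0 : d0 ∈ cd.D) {F : W → H}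
    (hF : ∀ v, v = u ∨ cd.ltU d0 v u → cd.IsF d0 v (F v)) {q₁ q₂ : W →₀ A Γ}
    (h₁ : IsUnitriangular (alt0Subring Γ) (cd.ltU d0) u q₁)
    (h₂ : IsUnitriangular (alt0Subring Γ) (cd.ltU d0) u q₂)
    (hq : Finsupp.linearCombination (A Γ) (fun v => d.C d0 * F v) (q₁ - q₂) ∈ d.Hltc c) :
    q₁ = q₂ := by
  have hlow : ∀ v ∈ (q₁ - q₂).support, cd.ltU d0 v u := (h₁.sub_mem_lowerTerms h₂).1
  exact sub_eq_zero.mp (eq_zero_of_linearCombination_mem d.bC (mul_right_injective d0)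
    (fun v hv _ hn => d.repr_C_eq_zero_of_mem_Hltc hn (cd.mul_mem hd0 (hlow v hv).1))
    (fun v hv => (hF v (Or.inr (hlow v hv))).2) hq)

end CellDecomp

end KL

theorem statement_6_general {B W : Type} [Group W] {M : CoxeterMatrix B} {Γ : Type}
    [AddCommGroup Γ] [LinearOrder Γ] [IsOrderedAddMonoid Γ] {H : Type} [Ring H] [Algebra (A Γ) H]
    (d : KLData M W Γ H) (c : Set W) (cd : CellDecomp d c)
    (d0 : W) (hd0 : d0 ∈ cd.D) (u : W)
    (F : W → H)
    (hF : ∀ u' : W, u' = u ∨ (u' ∈ cd.Ud d0 ∧ d.bruhatLT u' u) → cd.IsF d0 u' (F u')) :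
    (∃! qf : W →₀ A Γ,
      (qf u = 1 ∧ ∀ u' : W, u' ≠ u → qf u' ∈ Alt0 Γ ∧
          (qf u' ≠ 0 → u' ∈ cd.Ud d0 ∧ d.bruhatLT u' u)) ∧
      d.C d0 * d.T u - qf.sum (fun u' a => a • (d.C d0 * F u')) ∈ d.Hltc c) ∧
    (∀ qf : W →₀ A Γ,
      ((qf u = 1 ∧ ∀ u' : W, u' ≠ u → qf u' ∈ Alt0 Γ ∧
          (qf u' ≠ 0 → u' ∈ cd.Ud d0 ∧ d.bruhatLT u' u)) ∧
        d.C d0 * d.T u - qf.sum (fun u' a => a • (d.C d0 * F u')) ∈ d.Hltc c) →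
      d.T u⁻¹ * d.C d0 - qf.sum (fun u' a => a • (d.flat (F u') * d.C d0))
        ∈ d.Hltc c) := by
  have hcond (qf : W →₀ A Γ) :=
    isUnitriangular_iff (S := alt0Subring Γ) (f := qf) (cd.not_ltU_self d0 u)
  obtain ⟨q, hq, hqT⟩ := exists_isUnitriangular_linearCombination_eq d.bT
    (cd.wellFounded_ltU d0) fun v hv => (hF v hv).isUnitriangular
  have hsum (qf : W →₀ A Γ) : qf.sum (fun u' a => a • (d.C d0 * F u')) =
      Finsupp.linearCombination (A Γ) (fun u' => d.C d0 * F u') qf :=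
    (Finsupp.linearCombination_apply _ _).symm
  have hCT : d.C d0 * d.T u = Finsupp.linearCombination (A Γ) (fun u' => d.C d0 * F u') q := by
    rw [KLData.T, ← hqT, Finsupp.linearCombination_apply, Finsupp.linearCombination_apply,
      Finsupp.mul_sum]
    simp only [mul_smul_comm]
  have huniq (qf : W →₀ A Γ) (hqf : IsUnitriangular (alt0Subring Γ) (cd.ltU d0) u qf)
      (hmem : d.C d0 * d.T u - qf.sum (fun u' a => a • (d.C d0 * F u')) ∈ d.Hltc c) : qf = q :=
    (cd.eq_of_isUnitriangular_of_mem_Hltc hd0 hF hq hqf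
      (by rwa [map_sub, ← hCT, ← hsum])).symm
  refine ⟨⟨q, ⟨(hcond q).1 hq, by rw [hsum, hCT, sub_self]; exact zero_mem _⟩,
    fun qf hqf => huniq qf ((hcond qf).2 hqf.1) hqf.2⟩, fun qf hqf => ?_⟩
  obtain rfl := huniq qf ((hcond qf).2 hqf.1) hqf.2
  have hflat : d.T u⁻¹ = d.flat (Finsupp.linearCombination (A Γ) F qf) := by
    rw [hqT]
    exact (d.bT.constr_basis ℕ (fun w => d.bT w⁻¹) u).symm
  rw [hflat, Finsupp.linearCombination_apply, map_finsuppSum, Finsupp.sum_mul]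
  simp only [map_smul, smul_mul_assoc, sub_self, zero_mem]

/-- under Assumption (*), there are unique `q_{u',u} ∈ A` (`q_{u,u} = 1`,
`q_{u',u} ∈ A_{<0}` for `u' ≠ u`, supported on `u' ∈ U_d`, `u' < u`) with
`C_d T_u ≡ Σ q_{u',u} C_d F_{u'} mod H_{<c}`; consequently
`T_{u⁻¹} C_d ≡ Σ q_{u',u} E_{u'⁻¹} C_d mod H_{<c}`. -/
theorem statement_6 {B W : Type} [Group W] {M : CoxeterMatrix B} {Γ : Type}
    [AddCommGroup Γ] [LinearOrder Γ] [IsOrderedAddMonoid Γ] {H : Type} [Ring H] [Algebra (A Γ) H]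
    (d : KLData M W Γ H) (c : Set W) (cd : CellDecomp d c)
    (d0 : W) (hd0 : d0 ∈ cd.D) (u : W) (hu : u ∈ cd.Ud d0)
    (F : W → H)
    (hF : ∀ u' : W, u' = u ∨ (u' ∈ cd.Ud d0 ∧ d.bruhatLT u' u) → cd.IsF d0 u' (F u')) :
    (∃! qf : W →₀ A Γ,
      (qf u = 1 ∧ ∀ u' : W, u' ≠ u → qf u' ∈ Alt0 Γ ∧
          (qf u' ≠ 0 → u' ∈ cd.Ud d0 ∧ d.bruhatLT u' u)) ∧
      d.C d0 * d.T u - qf.sum (fun u' a => a • (d.C d0 * F u')) ∈ d.Hltc c) ∧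
    (∀ qf : W →₀ A Γ,
      ((qf u = 1 ∧ ∀ u' : W, u' ≠ u → qf u' ∈ Alt0 Γ ∧
          (qf u' ≠ 0 → u' ∈ cd.Ud d0 ∧ d.bruhatLT u' u)) ∧
        d.C d0 * d.T u - qf.sum (fun u' a => a • (d.C d0 * F u')) ∈ d.Hltc c) →
      d.T u⁻¹ * d.C d0 - qf.sum (fun u' a => a • (d.flat (F u') * d.C d0))
        ∈ d.Hltc c) :=
  statement_6_general d c cd d0 hd0 u F hF
end
end

section
/- Assume c < b in Γ. Then in the Hecke algebra of the affine Weyl group of type C̃2 one has C_{101} = C_1 T_0 C_1 − q^{-b} ξ_c C_1, and explicitly C_{101} = T_{101} + q^{-b}(T_{10} + T_{01}) + q^{-2b} T_0 − q^{-b} ξ_c T_1 − q^{-2b} ξ_c T_e. -/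
open scoped Classical TensorProduct

noncomputable section

open KL

/-!
For a simple reflection, `C_s = T_s + q^{-L(s)}` and `C_s² = η_{L(s)} C_s`. Since
`bar T_{s_j} = T_{s_j} - ξ_{L(s_j)}`, this makes `X = C_{s_i} T_{s_j} C_{s_i} - q^{-L(s_i)} ξ_{L(s_j)} C_{s_i}`
bar-invariant. When `s_i s_j s_i` is reduced, expanding gives `X = T_{s_i s_j s_i} + ...` where,
as `L(s_j) < L(s_i)`, every other coefficient lies in `A_{<0}`. A bar-invariant element of
`H_{<0}` vanishes (the bar involution is unitriangular with respect to length, so a coefficient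
of maximal length is bar-invariant and in `A_{<0}`), hence `X = C_{s_i s_j s_i}`. In `C̃₂`,
`s₁ s₀ s₁` has length `3`, as a representation on the symmetries of a square shows.
-/

namespace KL

variable {Γ : Type} [AddCommGroup Γ]

def abar : A Γ ≃ₐ[ℤ] A Γ := AddMonoidAlgebra.domCongr ℤ ℤ (AddEquiv.neg Γ)

@[simp] lemma abar_qe (γ : Γ) : abar (qe γ) = qe (-γ) := by
  simp [abar, qe]

lemma coeff_abar (p : A Γ) (γ : Γ) : (abar p).coeff γ = p.coeff (-γ) := by
  simp [abar, AddMonoidAlgebra.coeff_domCongr]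

lemma qe_mul_qe (γ δ : Γ) : qe γ * qe δ = qe (γ + δ) := by
  simp [qe, AddMonoidAlgebra.single_mul_single]

lemma qe_zero : qe (0 : Γ) = 1 := rfl

lemma abar_xi (γ : Γ) : abar (xi γ) = -xi γ := by
  simp [xi]

lemma qe_mul_xi (γ δ : Γ) : qe γ * xi δ = qe (γ + δ) - qe (γ - δ) := by
  rw [xi, mul_sub, qe_mul_qe, qe_mul_qe, sub_eq_add_neg γ]

variable [LinearOrder Γ] [IsOrderedAddMonoid Γ]

lemma add_mem_Alt0 {p p' : A Γ} (hp : p ∈ Alt0 Γ) (hp' : p' ∈ Alt0 Γ) : p + p' ∈ Alt0 Γ :=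
  fun γ hγ => (Finset.mem_union.mp (Finsupp.support_add hγ)).elim (hp γ) (hp' γ)

lemma neg_mem_Alt0 {p : A Γ} (hp : p ∈ Alt0 Γ) : -p ∈ Alt0 Γ := by
  intro γ hγ
  rw [AddMonoidAlgebra.coeff_neg, Finsupp.support_neg] at hγ
  exact hp γ hγ

lemma sub_mem_Alt0 {p p' : A Γ} (hp : p ∈ Alt0 Γ) (hp' : p' ∈ Alt0 Γ) : p - p' ∈ Alt0 Γ := by
  rw [sub_eq_add_neg]
  exact add_mem_Alt0 hp (neg_mem_Alt0 hp')

lemma qe_mem_Alt0 {γ : Γ} (hγ : γ < 0) : qe γ ∈ Alt0 Γ := by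
  intro δ hδ
  rw [qe, AddMonoidAlgebra.coeff_single, Finsupp.support_single _ one_ne_zero,
    Finset.mem_singleton] at hδ
  exact hδ ▸ hγ

lemma qe_mul_xi_mem_Alt0 {γ δ : Γ} (h₁ : γ + δ < 0) (h₂ : γ - δ < 0) : qe γ * xi δ ∈ Alt0 Γ := by
  rw [qe_mul_xi]
  exact sub_mem_Alt0 (qe_mem_Alt0 h₁) (qe_mem_Alt0 h₂)

/-- `γ` and `-γ` cannot both lie in the support, as they cannot both be negative. -/
lemma eq_zero_of_abar_eq_self_of_mem_Alt0 {p : A Γ} (hp : p ∈ Alt0 Γ) (h : abar p = p) :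
    p = 0 := by
  rw [← AddMonoidAlgebra.coeff_eq_zero]
  ext γ
  by_contra hγ
  have hneg : (-γ) ∈ p.coeff.support := by
    rw [Finsupp.mem_support_iff, ← h, coeff_abar, neg_neg]
    exact hγ
  have hγneg : γ < 0 := hp γ (Finsupp.mem_support_iff.mpr hγ)
  exact absurd (hp _ hneg) (not_lt.mpr (neg_nonneg.mpr hγneg.le))

end KL

lemma CoxeterSystem.length_eq_two_of_length_simple_mul_simple_mul_simple_eq_three
    {B W : Type} [Group W] {M : CoxeterMatrix B} (cs : CoxeterSystem M W) {i j : B}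
    (h3 : cs.length (cs.simple i * cs.simple j * cs.simple i) = 3) :
    cs.length (cs.simple i * cs.simple j) = 2 ∧ cs.length (cs.simple j * cs.simple i) = 2 := by
  have hij := cs.length_mul_le (cs.simple i * cs.simple j) (cs.simple i)
  have hji := cs.length_mul_le (cs.simple i) (cs.simple j * cs.simple i)
  have hij' := cs.length_mul_le (cs.simple i) (cs.simple j)
  have hji' := cs.length_mul_le (cs.simple j) (cs.simple i)
  rw [← mul_assoc] at hji
  simp only [CoxeterSystem.length_simple] at *
  omega

namespace KL.KLData

variable {B W : Type} [Group W] {M : CoxeterMatrix B} {Γ : Type}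
  [AddCommGroup Γ] [LinearOrder Γ] [IsOrderedAddMonoid Γ] {H : Type} [Ring H] [Algebra (A Γ) H]
  (d : KLData M W Γ H)

local notation "s" => d.cs.simple
local notation "ℓ" => d.cs.length

lemma T_mul_T {w w' : W} (h : ℓ (w * w') = ℓ w + ℓ w') : d.T w * d.T w' = d.T (w * w') :=
  d.T_mul w w' h

lemma T_one : d.T 1 = 1 := by
  have hidem : d.T 1 * d.T 1 = d.T 1 := by simpa using d.T_mul_T (w := 1) (w' := 1) (by simp)
  have hunit : d.bar (d.T 1) * d.T 1 = 1 := by simpa [T] using d.bar_T 1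
  calc d.T 1 = d.bar (d.T 1) * d.T 1 * d.T 1 := by rw [hunit, one_mul]
    _ = 1 := by rw [mul_assoc, hidem, hunit]

lemma T_simple_mul_self (i : B) : d.T (s i) * d.T (s i) = xi (d.L (s i)) • d.T (s i) + 1 := by
  set x := d.T (s i)
  set ℓi := d.L (s i)
  have hcomm : x * algebraMap (A Γ) H (qe ℓi) = algebraMap (A Γ) H (qe ℓi) * x :=
    (Algebra.commutes _ _).symm
  have hinv : algebraMap (A Γ) H (qe (-ℓi)) * algebraMap (A Γ) H (qe ℓi) = 1 := by
    rw [← map_mul, qe_mul_qe, neg_add_cancel, qe_zero, map_one]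
  have hfactor : x * x - (xi ℓi • x + 1) =
      (x + algebraMap (A Γ) H (qe (-ℓi))) * (x - algebraMap (A Γ) H (qe ℓi)) := by
    rw [Algebra.smul_def, xi, map_sub, add_mul, mul_sub, mul_sub, hcomm, hinv]
    noncomm_ring
  rw [← sub_eq_zero, hfactor]
  exact d.T_quad i

lemma T_simple_mul_T_of_length_simple_mul_lt (i : B) {w : W} (h : ℓ (s i * w) + 1 = ℓ w) :
    d.T (s i) * d.T w = xi (d.L (s i)) • d.T w + d.T (s i * w) := by
  have hw : d.T (s i) * d.T (s i * w) = d.T w := by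
    rw [d.T_mul_T (by rw [d.cs.simple_mul_simple_cancel_left, d.cs.length_simple]; omega),
      d.cs.simple_mul_simple_cancel_left]
  calc d.T (s i) * d.T w = (d.T (s i) * d.T (s i)) * d.T (s i * w) := by rw [mul_assoc, hw]
    _ = xi (d.L (s i)) • d.T w + d.T (s i * w) := by
      rw [T_simple_mul_self, add_mul, smul_mul_assoc, hw, one_mul]

lemma bar_algebraMap (p : A Γ) : d.bar (algebraMap (A Γ) H p) = algebraMap (A Γ) H (abar p) := by
  induction p using AddMonoidAlgebra.induction_linear with
  | zero => simp
  | add p p' hp hp' => simp only [map_add, hp, hp']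
  | single γ n =>
    have hsingle : (AddMonoidAlgebra.single γ n : A Γ) = n • qe γ := by
      rw [qe, AddMonoidAlgebra.smul_single', mul_one]
    simp only [hsingle, map_zsmul, d.bar_q, abar_qe]

lemma bar_smul (p : A Γ) (x : H) : d.bar (p • x) = abar p • d.bar x := by
  rw [Algebra.smul_def, map_mul, bar_algebraMap, ← Algebra.smul_def]

lemma bar_T_simple (i : B) : d.bar (d.T (s i)) = d.T (s i) - xi (d.L (s i)) • 1 := by
  have hunit : d.bar (d.T (s i)) * d.T (s i) = 1 := by simpa [T] using d.bar_T (s i)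
  have hinv : d.T (s i) * (d.T (s i) - xi (d.L (s i)) • 1) = 1 := by
    rw [mul_sub, mul_smul_comm, mul_one, T_simple_mul_self, add_sub_cancel_left]
  calc d.bar (d.T (s i)) = d.bar (d.T (s i)) * d.T (s i) * (d.T (s i) - xi (d.L (s i)) • 1) := by
        rw [mul_assoc, hinv, mul_one]
    _ = d.T (s i) - xi (d.L (s i)) • 1 := by rw [hunit, one_mul]

def spanLengthLT (n : ℕ) : Submodule (A Γ) H := Submodule.span (A Γ) (d.T '' {z | ℓ z < n})

variable {d}

lemma T_mem_spanLengthLT {z : W} {n : ℕ} (h : ℓ z < n) : d.T z ∈ d.spanLengthLT n :=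
  Submodule.subset_span ⟨z, h, rfl⟩

lemma spanLengthLT_mono {n m : ℕ} (h : n ≤ m) : d.spanLengthLT n ≤ d.spanLengthLT m :=
  Submodule.span_mono (Set.image_mono fun _ hz => lt_of_lt_of_le hz h)

lemma repr_apply_eq_zero_of_mem_spanLengthLT {x : H} {y : W} (hx : x ∈ d.spanLengthLT (ℓ y)) :
    d.bT.repr x y = 0 := by
  by_contra hy
  have hlt : ℓ y < ℓ y := Module.Basis.mem_span_image d.bT |>.mp hx (Finsupp.mem_support_iff.mpr hy)
  exact lt_irrefl _ hlt

lemma T_simple_mul_mem_spanLengthLT (i : B) {n : ℕ} {x : H} (hx : x ∈ d.spanLengthLT n) :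
    d.T (s i) * x ∈ d.spanLengthLT (n + 1) := by
  induction hx using Submodule.span_induction with
  | mem x hx =>
    obtain ⟨z, hz, rfl⟩ := hx
    have hz : ℓ z < n := hz
    rcases d.cs.length_simple_mul z i with hup | hdown
    · rw [d.T_mul_T (by rw [hup, d.cs.length_simple, add_comm])]
      exact T_mem_spanLengthLT (by omega)
    · rw [d.T_simple_mul_T_of_length_simple_mul_lt i hdown]
      exact add_mem (Submodule.smul_mem _ _ (T_mem_spanLengthLT (by omega)))
        (T_mem_spanLengthLT (by omega))
  | zero => simp
  | add x x' _ _ hx hx' => rw [mul_add]; exact add_mem hx hx'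
  | smul p x _ hx => rw [mul_smul_comm]; exact Submodule.smul_mem _ _ hx

lemma bar_T_sub_T_mem_spanLengthLT (w : W) : d.bar (d.T w) - d.T w ∈ d.spanLengthLT (ℓ w) := by
  induction hn : ℓ w generalizing w with
  | zero =>
    rw [d.cs.length_eq_zero_iff.mp hn, T_one, map_one, sub_self]
    exact zero_mem _
  | succ n ih =>
    have hw1 : w ≠ 1 := by
      rintro rfl
      simp at hn
    obtain ⟨i, hi⟩ := d.cs.exists_leftDescent_of_ne_one hw1
    have hw' : ℓ (s i * w) = n := by
      have := d.cs.isLeftDescent_iff.mp hi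
      omega
    set w' := s i * w
    have hw : w = s i * w' := (d.cs.simple_mul_simple_cancel_left i).symm
    have hE := ih w' hw'
    have hT : d.T w = d.T (s i) * d.T w' := by
      rw [d.T_mul_T (by rw [← hw, hn, hw', d.cs.length_simple, add_comm]), ← hw]
    have hexpand : d.bar (d.T w) - d.T w = d.T (s i) * (d.bar (d.T w') - d.T w')
        - xi (d.L (s i)) • d.T w' - xi (d.L (s i)) • (d.bar (d.T w') - d.T w') := by
      rw [hT, map_mul, bar_T_simple]
      simp only [sub_mul, mul_sub, smul_mul_assoc, one_mul, smul_sub]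
      abel
    rw [hexpand]
    exact sub_mem (sub_mem (T_simple_mul_mem_spanLengthLT i hE)
      (Submodule.smul_mem _ _ (T_mem_spanLengthLT (by omega))))
      (Submodule.smul_mem _ _ (spanLengthLT_mono (by omega) hE))

lemma add_mem_Hlt0 {x y : H} (hx : x ∈ d.Hlt0) (hy : y ∈ d.Hlt0) : x + y ∈ d.Hlt0 := by
  intro w
  rw [map_add, Finsupp.add_apply]
  exact add_mem_Alt0 (hx w) (hy w)

lemma sub_mem_Hlt0 {x y : H} (hx : x ∈ d.Hlt0) (hy : y ∈ d.Hlt0) : x - y ∈ d.Hlt0 := by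
  intro w
  rw [map_sub, Finsupp.sub_apply]
  exact sub_mem_Alt0 (hx w) (hy w)

lemma smul_T_mem_Hlt0 {p : A Γ} (hp : p ∈ Alt0 Γ) (w : W) : p • d.T w ∈ d.Hlt0 := by
  intro y
  rw [map_smul, T, d.bT.repr_self, Finsupp.smul_single, Finsupp.single_apply, smul_eq_mul, mul_one]
  split_ifs
  · exact hp
  · intro γ hγ
    simp at hγ

lemma eq_zero_of_bar_eq_self_of_mem_Hlt0 {h : H} (hbar : d.bar h = h) (hlt : h ∈ d.Hlt0) :
    h = 0 := by
  by_contra hne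
  set S := (d.bT.repr h).support
  obtain ⟨y₀, hy₀S, hy₀max⟩ := S.exists_max_image ℓ
    (Finsupp.support_nonempty_iff.mpr (by simpa using hne))
  have hsum : h = ∑ y ∈ S, d.bT.repr h y • d.T y := by
    conv_lhs => rw [← d.bT.linearCombination_repr h]
    rfl
  have hlow : ∑ y ∈ S, abar (d.bT.repr h y) • (d.bar (d.T y) - d.T y) ∈ d.spanLengthLT (ℓ y₀) :=
    sum_mem fun y hy => Submodule.smul_mem _ _
      (spanLengthLT_mono (hy₀max y hy) (bar_T_sub_T_mem_spanLengthLT y))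
  have hbar_sum : d.bar h = ∑ y ∈ S, abar (d.bT.repr h y) • d.T y +
      ∑ y ∈ S, abar (d.bT.repr h y) • (d.bar (d.T y) - d.T y) := by
    conv_lhs => rw [hsum]
    simp only [map_sum, bar_smul, ← Finset.sum_add_distrib, ← smul_add, add_sub_cancel]
  have hcoeff : d.bT.repr h y₀ = abar (d.bT.repr h y₀) := by
    conv_lhs => rw [← hbar, hbar_sum]
    rw [map_add, Finsupp.add_apply, repr_apply_eq_zero_of_mem_spanLengthLT hlow, add_zero,
      map_sum, Finset.sum_apply']
    simp [T, Finsupp.single_apply, hy₀S]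
  exact Finsupp.mem_support_iff.mp hy₀S
    (eq_zero_of_abar_eq_self_of_mem_Alt0 (hlt y₀) hcoeff.symm)

lemma eq_C_of_bar_eq_self {w : W} {X : H} (hbar : d.bar X = X) (hX : X - d.T w ∈ d.Hlt0) :
    X = d.C w := by
  refine sub_eq_zero.mp (eq_zero_of_bar_eq_self_of_mem_Hlt0 (d := d) ?_ ?_)
  · rw [map_sub, hbar, C, d.bar_C]
  · rw [← sub_sub_sub_cancel_right X (d.C w) (d.T w)]
    exact sub_mem_Hlt0 hX (d.C_mod w)

variable (d)

lemma L_simple_pos (i : B) : 0 < d.L (s i) :=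
  d.L_pos _ fun h => by simpa [h] using d.cs.length_simple i

lemma C_simple (i : B) : d.C (s i) = d.T (s i) + qe (-d.L (s i)) • 1 := by
  refine (eq_C_of_bar_eq_self (d := d) ?_ ?_).symm
  · rw [map_add, bar_smul, map_one, bar_T_simple, abar_qe, neg_neg, xi]
    module
  · rw [add_sub_cancel_left, ← d.T_one]
    exact smul_T_mem_Hlt0 (qe_mem_Alt0 (neg_neg_of_pos (d.L_simple_pos i))) 1

lemma C_simple_mul_self (i : B) : d.C (s i) * d.C (s i) = eta (d.L (s i)) • d.C (s i) := by
  have hq : qe (d.L (s i)) * qe (-d.L (s i)) = 1 := by rw [qe_mul_qe, add_neg_cancel, qe_zero]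
  rw [C_simple]
  simp only [add_mul, mul_add, smul_mul_assoc, mul_smul_comm, one_mul, mul_one,
    T_simple_mul_self]
  rw [xi, eta]
  linear_combination (norm := module) hq.symm • (1 : H)

variable {i j : B}

lemma C_mul_T_mul_C_sub_eq (h3 : ℓ (s i * s j * s i) = 3) :
    d.C (s i) * d.T (s j) * d.C (s i) - (qe (-d.L (s i)) * xi (d.L (s j))) • d.C (s i) =
      d.T (s i * s j * s i) + qe (-d.L (s i)) • (d.T (s i * s j) + d.T (s j * s i))
        + qe (-(d.L (s i) + d.L (s i))) • d.T (s j)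
        - (qe (-d.L (s i)) * xi (d.L (s j))) • d.T (s i)
        - (qe (-(d.L (s i) + d.L (s i))) * xi (d.L (s j))) • d.T 1 := by
  obtain ⟨hij, hji⟩ := d.cs.length_eq_two_of_length_simple_mul_simple_mul_simple_eq_three h3
  have hTij : d.T (s i) * d.T (s j) = d.T (s i * s j) := d.T_mul_T (by simp [hij])
  have hTji : d.T (s j) * d.T (s i) = d.T (s j * s i) := d.T_mul_T (by simp [hji])
  have hTiji : d.T (s i * s j) * d.T (s i) = d.T (s i * s j * s i) :=
    d.T_mul_T (by simp [hij, h3])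
  have hq : qe (-(d.L (s i) + d.L (s i))) = qe (-d.L (s i)) * qe (-d.L (s i)) := by
    rw [qe_mul_qe, neg_add]
  rw [C_simple, d.T_one, hq]
  simp only [add_mul, mul_add, smul_mul_assoc, mul_smul_comm, one_mul, mul_one, hTij, hTji,
    hTiji]
  module

lemma bar_C_mul_T_mul_C_sub_eq :
    d.bar (d.C (s i) * d.T (s j) * d.C (s i) - (qe (-d.L (s i)) * xi (d.L (s j))) • d.C (s i)) =
      d.C (s i) * d.T (s j) * d.C (s i) - (qe (-d.L (s i)) * xi (d.L (s j))) • d.C (s i) := by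
  have hCxiC : d.C (s i) * (xi (d.L (s j)) • 1) * d.C (s i) =
      (xi (d.L (s j)) * eta (d.L (s i))) • d.C (s i) := by
    rw [mul_smul_comm, mul_one, smul_mul_assoc, C_simple_mul_self, smul_smul]
  rw [map_sub, map_mul, map_mul, bar_smul, C, d.bar_C, ← C, bar_T_simple, mul_sub, sub_mul, hCxiC,
    map_mul, abar_qe, abar_xi, neg_neg, eta]
  module

theorem C_simple_mul_simple_mul_simple (h3 : ℓ (s i * s j * s i) = 3)
    (hL : d.L (s j) < d.L (s i)) :
    d.C (s i * s j * s i) =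
        d.C (s i) * d.T (s j) * d.C (s i) - (qe (-d.L (s i)) * xi (d.L (s j))) • d.C (s i) ∧
      d.C (s i * s j * s i) =
        d.T (s i * s j * s i) + qe (-d.L (s i)) • (d.T (s i * s j) + d.T (s j * s i))
          + qe (-(d.L (s i) + d.L (s i))) • d.T (s j)
          - (qe (-d.L (s i)) * xi (d.L (s j))) • d.T (s i)
          - (qe (-(d.L (s i) + d.L (s i))) * xi (d.L (s j))) • d.T 1 := by
  have hLi := d.L_simple_pos i
  have hLj := d.L_simple_pos j
  have hmem : ∀ {γ : Γ}, d.L (s i) ≤ γ → qe (-γ) ∈ Alt0 Γ ∧ qe (-γ) * xi (d.L (s j)) ∈ Alt0 Γ :=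
    fun hγ => ⟨qe_mem_Alt0 (neg_neg_of_pos (hLi.trans_le hγ)),
      qe_mul_xi_mem_Alt0 (neg_add_neg_iff.mpr (hL.trans_le hγ))
        (sub_neg.mpr ((neg_neg_of_pos (hLi.trans_le hγ)).trans hLj))⟩
  obtain ⟨hq1, hq1xi⟩ := hmem le_rfl
  obtain ⟨hq2, hq2xi⟩ := hmem (le_add_of_nonneg_left hLi.le)
  have hC := eq_C_of_bar_eq_self (w := s i * s j * s i) d.bar_C_mul_T_mul_C_sub_eq <| by
    rw [d.C_mul_T_mul_C_sub_eq h3]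
    convert_to qe (-d.L (s i)) • d.T (s i * s j) + qe (-d.L (s i)) • d.T (s j * s i)
        + qe (-(d.L (s i) + d.L (s i))) • d.T (s j)
        - (qe (-d.L (s i)) * xi (d.L (s j))) • d.T (s i)
        - (qe (-(d.L (s i) + d.L (s i))) * xi (d.L (s j))) • d.T 1 ∈ d.Hlt0 using 1
    · module
    exact sub_mem_Hlt0 (sub_mem_Hlt0 (add_mem_Hlt0 (add_mem_Hlt0 (smul_T_mem_Hlt0 hq1 _)
      (smul_T_mem_Hlt0 hq1 _)) (smul_T_mem_Hlt0 hq2 _)) (smul_T_mem_Hlt0 hq1xi _))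
      (smul_T_mem_Hlt0 hq2xi _)
  exact ⟨hC.symm, hC ▸ d.C_mul_T_mul_C_sub_eq h3⟩

end KL.KLData

namespace KL

/-- The symmetries of a square with vertices `0, 1, 2, 3` in cyclic order: `s₀` and `s₂` act as
the reflection in the perpendicular bisector of the edge `01`, `s₁` as the reflection in the
diagonal `02`. -/
def ct2SquareRep : Fin 3 → Equiv.Perm (Fin 4) :=
  ![Equiv.swap 0 1 * Equiv.swap 2 3, Equiv.swap 1 3, Equiv.swap 0 1 * Equiv.swap 2 3]

lemma ct2SquareRep_isLiftable : Ct2.IsLiftable ct2SquareRep := by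
  unfold CoxeterMatrix.IsLiftable
  decide

lemma length_simple_one_mul_simple_zero_mul_simple_one {W : Type} [Group W]
    (cs : CoxeterSystem Ct2 W) : cs.length (cs.simple 1 * cs.simple 0 * cs.simple 1) = 3 := by
  have hle : cs.length (cs.simple 1 * cs.simple 0 * cs.simple 1) ≤ 3 := by
    have h₁ := cs.length_mul_le (cs.simple 1 * cs.simple 0) (cs.simple 1)
    have h₂ := cs.length_mul_le (cs.simple 1) (cs.simple 0)
    simp only [cs.length_simple] at h₁ h₂
    omega
  have hodd : cs.length (cs.simple 1 * cs.simple 0 * cs.simple 1) % 2 = 1 := by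
    rw [cs.length_mul_mod_two, Nat.add_mod, cs.length_mul_mod_two]
    simp [cs.length_simple]
  have hne : cs.length (cs.simple 1 * cs.simple 0 * cs.simple 1) ≠ 1 := by
    rw [Ne, cs.length_eq_one_iff]
    rintro ⟨k, hk⟩
    have hrep := congrArg (cs.lift ⟨ct2SquareRep, ct2SquareRep_isLiftable⟩) hk
    simp only [map_mul, cs.lift_apply_simple] at hrep
    revert hrep
    fin_cases k <;> decide
  omega

end KL

theorem statement_14_general {W : Type} [Group W] {Γ : Type}
    [AddCommGroup Γ] [LinearOrder Γ] [IsOrderedAddMonoid Γ] {H : Type} [Ring H] [Algebra (A Γ) H] (d : KLData Ct2 W Γ H)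
    (b c : Γ)
    (s0 s1 : W) (hs0 : s0 = d.cs.simple 0) (hs1 : s1 = d.cs.simple 1)
    (hL0 : d.L s0 = c) (hL1 : d.L s1 = b) (hcb : c < b) :
    d.C (s1 * s0 * s1) =
      d.C s1 * d.T s0 * d.C s1 - (qe (-b) * xi c) • d.C s1 ∧
    d.C (s1 * s0 * s1) =
      d.T (s1 * s0 * s1) + qe (-b) • (d.T (s1 * s0) + d.T (s0 * s1))
        + qe (-(b + b)) • d.T s0 - (qe (-b) * xi c) • d.T s1
        - (qe (-(b + b)) * xi c) • d.T 1 := by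
  subst hs0 hs1 hL0 hL1
  exact d.C_simple_mul_simple_mul_simple (length_simple_one_mul_simple_zero_mul_simple_one d.cs) hcb

/-- in type C̃2 with `c < b`,
`C_{101} = C_1 T_0 C_1 - q^{-b} ξ_c C_1`, explicitly
`C_{101} = T_{101} + q^{-b}(T_{10} + T_{01}) + q^{-2b} T_0 - q^{-b} ξ_c T_1 - q^{-2b} ξ_c T_e`. -/
theorem statement_14 {W : Type} [Group W] {Γ : Type}
    [AddCommGroup Γ] [LinearOrder Γ] [IsOrderedAddMonoid Γ] {H : Type} [Ring H] [Algebra (A Γ) H] (d : KLData Ct2 W Γ H)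
    (a b c : Γ) (ha : 0 < a) (hb : 0 < b) (hc : 0 < c)
    (s0 s1 s2 : W) (hs0 : s0 = d.cs.simple 0) (hs1 : s1 = d.cs.simple 1)
    (hs2 : s2 = d.cs.simple 2)
    (hL0 : d.L s0 = c) (hL1 : d.L s1 = b) (hL2 : d.L s2 = a) (hcb : c < b) :
    d.C (s1 * s0 * s1) =
      d.C s1 * d.T s0 * d.C s1 - (qe (-b) * xi c) • d.C s1 ∧
    d.C (s1 * s0 * s1) =
      d.T (s1 * s0 * s1) + qe (-b) • (d.T (s1 * s0) + d.T (s0 * s1))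
        + qe (-(b + b)) • d.T s0 - (qe (-b) * xi c) • d.T s1
        - (qe (-(b + b)) * xi c) • d.T 1 :=
  statement_14_general d b c s0 s1 hs0 hs1 hL0 hL1 hcb
end
end
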